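/- In the 3-player cyclic quadratic network game with interaction weight γ ∈ (0,1) and conjectured shocks ε^{(1)}=(β,1,1), ε^{(2)}=(1,β,1), ε^{(3)}=(1,1,β) for β ∈ (0,1), the game-to-real gap of each player equals γ(γ² + γ + β)(1-β)(1-γ²)/(1-γ³)², which is strictly positive. -/

import Mathlib

/-!
Since `P³ = γ³ I`, we have `(I - P)⁻¹ = (I + P + P²) / (1 - γ³)` and, indices taken mod 3,
`((I - P)⁻¹ v)_j = (v_j + γ v_{j-1} + γ² v_{j-2}) / (1 - γ³)`. Hence every player predicts its
own action as `a = (β + γ + γ²) / (1 - γ³)`, so `u°` is constant `a`, while player `i` predicts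
its only in-neighbour `i - 1` at `b = (1 + γ + γ² β) / (1 - γ³)`. As `u°` and `u⁽ⁱ⁾` agree at `i`,
the gap of player `i` is `-a γ (a - b) = γ a (1 - β)(1 - γ²) / (1 - γ³)`.
-/

open Matrix

/-- Cost of player `i` in a scalar-action quadratic network game on `Fin 3`. -/
noncomputable def J3 (P : Matrix (Fin 3) (Fin 3) ℝ) (ε : Fin 3 → ℝ) (i : Fin 3)
    (u : Fin 3 → ℝ) : ℝ :=
  (1 / 2) * u i ^ 2 - u i * (P.mulVec u i + ε i)

open Finset

theorem Matrix.inv_one_sub_of_pow_eq_smul_one {n K : Type*} [Fintype n] [DecidableEq n]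
    [Field K] {P : Matrix n n K} {m : ℕ} {c : K} (hc : c ≠ 1) (hP : P ^ m = c • 1) :
    (1 - P)⁻¹ = (1 - c)⁻¹ • ∑ k ∈ range m, P ^ k := by
  apply inv_eq_right_inv
  rw [mul_smul_comm, mul_neg_geom_sum, hP, ← one_smul K (1 : Matrix n n K), smul_smul,
    ← sub_smul, smul_smul, mul_one, inv_mul_cancel₀ (sub_ne_zero.mpr hc.symm), one_smul]

section Cyclic

variable {R : Type*} [CommRing R] (γ : R)

theorem cyclic_mulVec_apply (v : Fin 3 → R) (j : Fin 3) :
    (!![0, 0, γ; γ, 0, 0; 0, γ, 0] *ᵥ v) j = γ * v (j - 1) := by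
  fin_cases j <;> simp [mulVec, dotProduct, Fin.sum_univ_three, show (-1 : Fin 3) = 2 from rfl]

theorem cyclic_pow_three :
    !![0, 0, γ; γ, 0, 0; 0, γ, 0] ^ 3 = γ ^ 3 • (1 : Matrix (Fin 3) (Fin 3) R) := by
  ext i j
  fin_cases i <;> fin_cases j <;> simp [pow_succ, mul_apply, Fin.sum_univ_three]

end Cyclic

theorem inv_one_sub_cyclic_mulVec_apply {K : Type*} [Field K] {γ : K} (hγ : γ ^ 3 ≠ 1)
    (v : Fin 3 → K) (j : Fin 3) :
    ((1 - !![0, 0, γ; γ, 0, 0; 0, γ, 0])⁻¹ *ᵥ v) j =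
      (v j + γ * v (j - 1) + γ ^ 2 * v (j - 1 - 1)) / (1 - γ ^ 3) := by
  rw [Matrix.inv_one_sub_of_pow_eq_smul_one hγ (cyclic_pow_three γ)]
  simp only [sum_range_succ, range_zero, sum_empty, zero_add, pow_zero, pow_one, pow_two,
    smul_mulVec, add_mulVec, one_mulVec, ← mulVec_mulVec, Pi.smul_apply, Pi.add_apply,
    cyclic_mulVec_apply, smul_eq_mul]
  field_simp

theorem J3_sub_J3_of_apply_eq {P : Matrix (Fin 3) (Fin 3) ℝ} {ε : Fin 3 → ℝ} {i : Fin 3}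
    {u v : Fin 3 → ℝ} (h : u i = v i) :
    J3 P ε i u - J3 P ε i v = -u i * (P *ᵥ (u - v)) i := by
  simp only [J3, h, mulVec_sub, Pi.sub_apply]
  ring

/-- in the 3-player cyclic quadratic network game with weight
`γ ∈ (0,1)` and conjectured shocks `ε⁽ⁱ⁾` equal to `1` everywhere except `β ∈ (0,1)`
at coordinate `i`, the game-to-real gap of each player equals
`γ(γ² + γ + β)(1-β)(1-γ²)/(1-γ³)²`, which is strictly positive. -/
theorem cyclic_game_gap (γ β : ℝ) (hγ : γ ∈ Set.Ioo (0 : ℝ) 1)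
    (hβ : β ∈ Set.Ioo (0 : ℝ) 1)
    (P : Matrix (Fin 3) (Fin 3) ℝ) (hP : P = !![0, 0, γ; γ, 0, 0; 0, γ, 0])
    (ε : Fin 3 → Fin 3 → ℝ) (hε : ∀ i j : Fin 3, ε i j = if j = i then β else 1)
    (upred : Fin 3 → Fin 3 → ℝ) (hupred : ∀ i, upred i = (1 - P)⁻¹.mulVec (ε i))
    (ureal : Fin 3 → ℝ) (hureal : ∀ i, ureal i = upred i i) :
    ∀ i : Fin 3,
      J3 P (ε i) i ureal - J3 P (ε i) i (upred i) =
        γ * (γ ^ 2 + γ + β) * (1 - β) * (1 - γ ^ 2) / (1 - γ ^ 3) ^ 2 ∧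
      0 < J3 P (ε i) i ureal - J3 P (ε i) i (upred i) := by
  obtain ⟨hγ0, hγ1⟩ := hγ
  obtain ⟨hβ0, hβ1⟩ := hβ
  have hγ3 : γ ^ 3 < 1 := pow_lt_one₀ hγ0.le hγ1 (by norm_num)
  rw [hP] at hupred
  have hshift : ∀ i : Fin 3, i - 1 ≠ i ∧ i - 1 - 1 ≠ i ∧ i - 1 - 1 - 1 = i := by decide
  have hown (i : Fin 3) : upred i i = (β + γ + γ ^ 2) / (1 - γ ^ 3) := by
    rw [hupred, inv_one_sub_cyclic_mulVec_apply hγ3.ne]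
    simp only [hε, hshift i, if_true, if_false]
    ring
  have hprev (i : Fin 3) : upred i (i - 1) = (1 + γ + γ ^ 2 * β) / (1 - γ ^ 3) := by
    rw [hupred, inv_one_sub_cyclic_mulVec_apply hγ3.ne]
    simp only [hε, hshift i, if_true, if_false]
    ring
  intro i
  have hgap : J3 P (ε i) i ureal - J3 P (ε i) i (upred i) =
      γ * (γ ^ 2 + γ + β) * (1 - β) * (1 - γ ^ 2) / (1 - γ ^ 3) ^ 2 := by
    rw [J3_sub_J3_of_apply_eq (hureal i), hP, cyclic_mulVec_apply, Pi.sub_apply, hureal, hureal,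
      hown, hown, hprev]
    field_simp
    ring
  refine ⟨hgap, hgap ▸ div_pos ?_ (pow_pos (sub_pos.2 hγ3) 2)⟩
  have hγ2 : γ ^ 2 < 1 := pow_lt_one₀ hγ0.le hγ1 (by norm_num)
  exact mul_pos (mul_pos (mul_pos hγ0 (by positivity)) (sub_pos.2 hβ1)) (sub_pos.2 hγ2)
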